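/- Let G = ([n],[B],E) be a left-d_L-regular (K,ε)-lossless bipartite expander. For X ⊆ [n] with |X| ≤ K and i ∈ X, let u_i = |{b ∈ U(X) : (i,b) ∈ E}| denote the number of unique neighbors of the vertex i. Then |{i ∈ X : u_i ≥ 1}| ≥ (1 − 2ε)·|X|, i.e., at least a (1 − 2ε)-fraction of the vertices of X have at least one unique neighbor. -/

import Mathlib

open Finset

/-- The neighborhood `N(X)` of a set `X` of left vertices in the bipartite graph with
edge set `E ⊆ [n] × [B]`. -/
def nbhd {n B : ℕ} (E : Finset (Fin n × Fin B)) (X : Finset (Fin n)) : Finset (Fin B) :=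
  Finset.univ.filter (fun b : Fin B => ∃ i ∈ X, (i, b) ∈ E)

/-- `u_b(X)`: the number of neighbors of the right vertex `b` inside `X`. -/
def multb {n B : ℕ} (E : Finset (Fin n × Fin B)) (X : Finset (Fin n)) (b : Fin B) : ℕ :=
  (X.filter (fun i => (i, b) ∈ E)).card

/-- `U(X)`: the set of unique neighbors of `X`, i.e. right vertices with exactly one
neighbor in `X`. -/
def uniqNbrs {n B : ℕ} (E : Finset (Fin n × Fin B)) (X : Finset (Fin n)) : Finset (Fin B) :=
  Finset.univ.filter (fun b : Fin B => multb E X b = 1)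

/-- The graph is left-`dL`-regular: every left vertex has exactly `dL` neighbors. -/
def LeftRegular {n B : ℕ} (E : Finset (Fin n × Fin B)) (dL : ℕ) : Prop :=
  ∀ i : Fin n, (Finset.univ.filter (fun b : Fin B => (i, b) ∈ E)).card = dL

/-- The graph is a `(K, ε)`-lossless expander: every `X` with `|X| ≤ K` satisfies
`|N(X)| ≥ (1 - ε) · dL · |X|`. -/
def Lossless {n B : ℕ} (E : Finset (Fin n × Fin B)) (dL K : ℕ) (ε : ℝ) : Prop :=
  ∀ X : Finset (Fin n), X.card ≤ K → ((nbhd E X).card : ℝ) ≥ (1 - ε) * dL * X.card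

/-- `u_i`: the number of unique neighbors (buckets in `U(X)`) adjacent to the left vertex `i`. -/
def uVert {n B : ℕ} (E : Finset (Fin n × Fin B)) (X : Finset (Fin n)) (i : Fin n) : ℕ :=
  ((uniqNbrs E X).filter (fun b => (i, b) ∈ E)).card

/-! Double counting the edges between `X` and `N(X)` gives `dL·|X| ≥ |U(X)| + 2·|N(X) \ U(X)|`,
so losslessness forces `|U(X)| ≥ (1 - 2ε)·dL·|X|`. Counting the same unique neighbors from the
left, each vertex of `X` owns at most `dL` of them, so at least `(1 - 2ε)·|X|` vertices own one. -/

section UniqueNeighbors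

variable {n B : ℕ} (E : Finset (Fin n × Fin B)) (X : Finset (Fin n))

lemma mem_nbhd_iff_multb_pos {b : Fin B} : b ∈ nbhd E X ↔ 0 < multb E X b := by
  simp [nbhd, multb, Finset.card_pos, Finset.Nonempty]

lemma sum_multb_eq_mul_card {dL : ℕ} (hreg : LeftRegular E dL) :
    ∑ b, multb E X b = dL * #X :=
  calc ∑ b, multb E X b = ∑ i ∈ X, #{b | (i, b) ∈ E} :=
        (sum_card_bipartiteAbove_eq_sum_card_bipartiteBelow (r := fun i b => (i, b) ∈ E)).symm
    _ = ∑ _i ∈ X, dL := sum_congr rfl fun i _ => hreg i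
    _ = dL * #X := by rw [sum_const, smul_eq_mul, mul_comm]

lemma two_mul_card_nbhd_le : 2 * #(nbhd E X) ≤ ∑ b, multb E X b + #(uniqNbrs E X) := by
  have hN : nbhd E X = univ.filter (0 < multb E X ·) := by
    ext b
    simp only [mem_nbhd_iff_multb_pos, mem_filter, mem_univ, true_and]
  simp only [hN, uniqNbrs, card_eq_sum_ones, sum_filter, mul_sum, ← sum_add_distrib]
  exact sum_le_sum fun b _ => by split_ifs <;> omega

lemma sum_uVert_eq_card_uniqNbrs : ∑ i ∈ X, uVert E X i = #(uniqNbrs E X) :=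
  calc ∑ i ∈ X, uVert E X i = ∑ b ∈ uniqNbrs E X, multb E X b :=
        sum_card_bipartiteAbove_eq_sum_card_bipartiteBelow (r := fun i b => (i, b) ∈ E)
    _ = ∑ _b ∈ uniqNbrs E X, 1 := sum_congr rfl fun _b hb => (mem_filter.1 hb).2
    _ = #(uniqNbrs E X) := card_eq_sum_ones _ |>.symm

lemma uVert_le {dL : ℕ} (hreg : LeftRegular E dL) (i : Fin n) : uVert E X i ≤ dL :=
  hreg i ▸ card_le_card (filter_subset_filter _ (subset_univ _))

lemma card_uniqNbrs_le_mul_card_filter {dL : ℕ} (hreg : LeftRegular E dL) :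
    #(uniqNbrs E X) ≤ dL * #{i ∈ X | 1 ≤ uVert E X i} :=
  calc #(uniqNbrs E X) = ∑ i ∈ X, uVert E X i := (sum_uVert_eq_card_uniqNbrs E X).symm
    _ = ∑ i ∈ X with 1 ≤ uVert E X i, uVert E X i :=
        (sum_filter_of_ne fun _i _ h => Nat.one_le_iff_ne_zero.2 h).symm
    _ ≤ ∑ i ∈ X with 1 ≤ uVert E X i, dL := sum_le_sum fun i _ => uVert_le E X hreg i
    _ = dL * #{i ∈ X | 1 ≤ uVert E X i} := by rw [sum_const, smul_eq_mul, mul_comm]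

lemma one_sub_two_mul_mul_card_le_card_uniqNbrs {dL K : ℕ} {ε : ℝ} (hreg : LeftRegular E dL)
    (hexp : Lossless E dL K ε) (hX : #X ≤ K) :
    (1 - 2 * ε) * dL * #X ≤ #(uniqNbrs E X) := by
  have hcount : 2 * #(nbhd E X) ≤ dL * #X + #(uniqNbrs E X) :=
    sum_multb_eq_mul_card E X hreg ▸ two_mul_card_nbhd_le E X
  have hcount' : (2 * #(nbhd E X) : ℝ) ≤ dL * #X + #(uniqNbrs E X) := by exact_mod_cast hcount
  linarith [hexp X hX]

end UniqueNeighbors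

theorem many_vertices_with_unique_neighbor_general (n B dL K : ℕ) (ε : ℝ)
    (hdL : 0 < dL)
    (E : Finset (Fin n × Fin B))
    (hreg : LeftRegular E dL) (hexp : Lossless E dL K ε) :
    ∀ X : Finset (Fin n), X.card ≤ K →
      (((X.filter (fun i => 1 ≤ uVert E X i)).card : ℝ)) ≥ (1 - 2 * ε) * X.card := by
  intro X hX
  have hmany := one_sub_two_mul_mul_card_le_card_uniqNbrs E X hreg hexp hX
  have hfew : (#(uniqNbrs E X) : ℝ) ≤ dL * #{i ∈ X | 1 ≤ uVert E X i} := by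
    exact_mod_cast card_uniqNbrs_le_mul_card_filter E X hreg
  rw [ge_iff_le, ← mul_le_mul_iff_right₀ (Nat.cast_pos.2 hdL : (0 : ℝ) < dL)]
  linarith

/-- In a left-`dL`-regular `(K,ε)`-lossless bipartite expander, for every
`X ⊆ [n]` with `|X| ≤ K`, at least a `(1 − 2ε)`-fraction of the vertices of `X` have at
least one unique neighbor. -/
theorem many_vertices_with_unique_neighbor (n B dL K : ℕ) (ε : ℝ)
    (hdL : 0 < dL) (hK : 0 < K) (hε0 : 0 < ε) (hε1 : ε < 1)
    (E : Finset (Fin n × Fin B))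
    (hreg : LeftRegular E dL) (hexp : Lossless E dL K ε) :
    ∀ X : Finset (Fin n), X.card ≤ K →
      (((X.filter (fun i => 1 ≤ uVert E X i)).card : ℝ)) ≥ (1 - 2 * ε) * X.card :=
  many_vertices_with_unique_neighbor_general n B dL K ε hdL E hreg hexp
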